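/- Let 𝔤 be a finite-dimensional real Lie algebra with symplectic structure Ω and positive compatible complex structure j, and let ξ : 𝔤 → ℝ be a nonzero linear map with ξ([u,v]) = 0 for all u, v ∈ 𝔤. On 𝔤' := 𝔤 × ℝ × ℝ define the bracket [(u,a,b),(v,a',b')]' := ([u,v], 0, ξ(v)a − ξ(u)a'), the form Ω'((u,a,b),(v,a',b')) := Ω(u,v) + ab' − ba', and j'(u,a,b) := (ju, −b, a). Then this bracket makes 𝔤' a Lie algebra, Ω' is a nondegenerate 2-cocycle, j' is a positive compatible complex structure, the span of the image of N^{j'} equals (span of the image of N^j) × ℝ × ℝ, and its Ω'-orthogonal complement equals ((span of the image of N^j)^⊥) × {0} × {0}. Moreover, if 𝔤 is nilpotent then 𝔤' is nilpotent. -/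

import Mathlib

/-- The algebraic Nijenhuis tensor of a linear map `j` on a Lie algebra. -/
def algNijenhuis {𝔤 : Type*} [LieRing 𝔤] [LieAlgebra ℝ 𝔤] (j : 𝔤 →ₗ[ℝ] 𝔤) (X Y : 𝔤) : 𝔤 :=
  ⁅j X, j Y⁆ - j ⁅j X, Y⁆ - j ⁅X, j Y⁆ - ⁅X, Y⁆

/-- The bracket `[(u,a,b),(v,a',b')]' = ([u,v], 0, ξ(v)a - ξ(u)a')` on `𝔤' = 𝔤 × ℝ × ℝ`. -/
def xiBracket {𝔤 : Type*} [LieRing 𝔤] [LieAlgebra ℝ 𝔤] (ξ : 𝔤 →ₗ[ℝ] ℝ)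
    (x y : 𝔤 × ℝ × ℝ) : 𝔤 × ℝ × ℝ :=
  (⁅x.1, y.1⁆, 0, ξ y.1 * x.2.1 - ξ x.1 * y.2.1)

/-- The symplectic form `Ω' = Ω ⊕ Ω_std` on `𝔤' = 𝔤 × ℝ × ℝ`. -/
def xiForm {𝔤 : Type*} [AddCommGroup 𝔤] [Module ℝ 𝔤] (Ω : 𝔤 →ₗ[ℝ] 𝔤 →ₗ[ℝ] ℝ)
    (x y : 𝔤 × ℝ × ℝ) : ℝ :=
  Ω x.1 y.1 + (x.2.1 * y.2.2 - x.2.2 * y.2.1)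

/-- The complex structure `j' = j ⊕ j_std` on `𝔤' = 𝔤 × ℝ × ℝ`, `j' c = d`. -/
def xiJ {𝔤 : Type*} [AddCommGroup 𝔤] [Module ℝ 𝔤] (j : 𝔤 →ₗ[ℝ] 𝔤)
    (x : 𝔤 × ℝ × ℝ) : 𝔤 × ℝ × ℝ :=
  (j x.1, -x.2.2, x.2.1)

/-- The Nijenhuis tensor of `j'` on `𝔤'` with the bracket `xiBracket ξ`. -/
def xiNijenhuis {𝔤 : Type*} [LieRing 𝔤] [LieAlgebra ℝ 𝔤] (ξ : 𝔤 →ₗ[ℝ] ℝ)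
    (j : 𝔤 →ₗ[ℝ] 𝔤) (x y : 𝔤 × ℝ × ℝ) : 𝔤 × ℝ × ℝ :=
  xiBracket ξ (xiJ j x) (xiJ j y) - xiJ j (xiBracket ξ (xiJ j x) y)
    - xiJ j (xiBracket ξ x (xiJ j y)) - xiBracket ξ x y

/-- Lower central series of a (bilinear) bracket on a real module. -/
def lcsOf {V : Type*} [AddCommGroup V] [Module ℝ V] (br : V → V → V) : ℕ → Submodule ℝ V
  | 0 => ⊤
  | (k + 1) => Submodule.span ℝ {w : V | ∃ x y, y ∈ lcsOf br k ∧ w = br x y}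

/-- A bracket is nilpotent if its lower central series reaches `⊥`. -/
def IsNilpotentBr {V : Type*} [AddCommGroup V] [Module ℝ V] (br : V → V → V) : Prop :=
  ∃ N : ℕ, lcsOf br N = ⊥

/-!
The bracket, form and complex structure on `𝔤 × ℝ × ℝ` are those of `𝔤` plus a standard
`ℝ²` part; all identities reduce to the ones on `𝔤` plus ring identities, the Jacobi identity
using that `ξ` kills brackets. For the Nijenhuis tensor, `N^{j'}` restricted to `𝔤 × 0 × 0` is
`N^j`, while for `u` with `ξ u ≠ 0` the map `(a, b) ↦ N^{j'}((0, a, b), (u, 0, 0))` is an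
isomorphism onto `0 × ℝ × ℝ`; so the image spans all of `(Im N^j) × ℝ × ℝ`. Since
`𝔤'¹ ⊆ [𝔤, 𝔤] × 0 × ℝ` and `ξ` vanishes on `[𝔤, 𝔤]`, the lower central series of `𝔤'`
satisfies `𝔤'ᵏ⁺² ⊆ 𝔤ᵏ⁺² × 0 × 0`.
-/

section FormAndComplexStructure

variable {𝔤 : Type*} [AddCommGroup 𝔤] [Module ℝ 𝔤] {Ω : 𝔤 →ₗ[ℝ] 𝔤 →ₗ[ℝ] ℝ} {j : 𝔤 →ₗ[ℝ] 𝔤}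

theorem xiForm_self (hΩ : ∀ X, Ω X X = 0) (x : 𝔤 × ℝ × ℝ) : xiForm Ω x x = 0 := by
  simp only [xiForm, hΩ]
  ring

theorem xiForm_nondegenerate (hΩ : ∀ X : 𝔤, (∀ Y, Ω X Y = 0) → X = 0)
    (x : 𝔤 × ℝ × ℝ) (hx : ∀ y, xiForm Ω x y = 0) : x = 0 := by
  have h₁ : x.1 = 0 := hΩ _ fun Y => by simpa [xiForm] using hx (Y, 0, 0)
  have h₂ : x.2.1 = 0 := by simpa [xiForm] using hx (0, 0, 1)
  have h₃ : x.2.2 = 0 := by simpa [xiForm] using hx (0, 1, 0)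
  exact Prod.ext h₁ (Prod.ext h₂ h₃)

theorem xiJ_xiJ (hj : ∀ X, j (j X) = -X) (x : 𝔤 × ℝ × ℝ) : xiJ j (xiJ j x) = -x := by
  simp [xiJ, hj, Prod.ext_iff]

theorem xiForm_xiJ_xiJ (hj : ∀ X Y, Ω (j X) (j Y) = Ω X Y) (x y : 𝔤 × ℝ × ℝ) :
    xiForm Ω (xiJ j x) (xiJ j y) = xiForm Ω x y := by
  simp only [xiForm, xiJ, hj]
  ring

theorem xiForm_xiJ_right_self (x : 𝔤 × ℝ × ℝ) :
    xiForm Ω x (xiJ j x) = Ω x.1 (j x.1) + (x.2.1 ^ 2 + x.2.2 ^ 2) := by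
  simp only [xiForm, xiJ]
  ring

theorem xiForm_xiJ_pos (hj : ∀ X, X ≠ 0 → 0 < Ω X (j X)) {x : 𝔤 × ℝ × ℝ} (hx : x ≠ 0) :
    0 < xiForm Ω x (xiJ j x) := by
  rw [xiForm_xiJ_right_self]
  by_cases h₁ : x.1 = 0
  · have h₂ : x.2.1 ≠ 0 ∨ x.2.2 ≠ 0 := by
      contrapose! hx
      exact Prod.ext h₁ (Prod.ext hx.1 hx.2)
    rw [h₁, map_zero, LinearMap.zero_apply, zero_add]
    rcases h₂ with h | h <;> nlinarith [sq_pos_of_ne_zero h, sq_nonneg x.2.1, sq_nonneg x.2.2]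
  · have := hj _ h₁
    positivity

theorem xiForm_orthogonal_prod_top (W : Submodule ℝ 𝔤) :
    {x : 𝔤 × ℝ × ℝ | ∀ w ∈ W.prod ((⊤ : Submodule ℝ ℝ).prod ⊤), xiForm Ω w x = 0} =
      {x | (∀ v ∈ W, Ω v x.1 = 0) ∧ x.2 = 0} := by
  ext x
  constructor
  · intro h
    have h₂ : x.2.2 = 0 := by simpa [xiForm] using h (0, 1, 0) ⟨W.zero_mem, trivial, trivial⟩
    have h₁ : x.2.1 = 0 := by simpa [xiForm] using h (0, 0, 1) ⟨W.zero_mem, trivial, trivial⟩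
    exact ⟨fun v hv => by simpa [xiForm] using h (v, 0, 0) ⟨hv, trivial, trivial⟩,
      Prod.ext h₁ h₂⟩
  · rintro ⟨h₁, h₂⟩ w ⟨hw, -, -⟩
    simp [xiForm, h₂, h₁ w.1 hw]

end FormAndComplexStructure

section Bracket

variable {𝔤 : Type*} [LieRing 𝔤] [LieAlgebra ℝ 𝔤] {ξ : 𝔤 →ₗ[ℝ] ℝ}

theorem xiBracket_add_left (x y z : 𝔤 × ℝ × ℝ) :
    xiBracket ξ (x + y) z = xiBracket ξ x z + xiBracket ξ y z := by
  simp only [xiBracket, Prod.fst_add, Prod.snd_add, add_lie, map_add, Prod.mk_add_mk,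
    Prod.ext_iff]
  exact ⟨trivial, by ring, by ring⟩

theorem xiBracket_smul_left (c : ℝ) (x y : 𝔤 × ℝ × ℝ) :
    xiBracket ξ (c • x) y = c • xiBracket ξ x y := by
  simp only [xiBracket, Prod.smul_fst, Prod.smul_snd, smul_lie, map_smul, smul_eq_mul,
    Prod.smul_mk, Prod.ext_iff]
  exact ⟨trivial, by ring, by ring⟩

theorem xiBracket_add_right (x y z : 𝔤 × ℝ × ℝ) :
    xiBracket ξ x (y + z) = xiBracket ξ x y + xiBracket ξ x z := by
  simp only [xiBracket, Prod.fst_add, Prod.snd_add, lie_add, map_add, Prod.mk_add_mk,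
    Prod.ext_iff]
  exact ⟨trivial, by ring, by ring⟩

theorem xiBracket_smul_right (c : ℝ) (x y : 𝔤 × ℝ × ℝ) :
    xiBracket ξ x (c • y) = c • xiBracket ξ x y := by
  simp only [xiBracket, Prod.smul_fst, Prod.smul_snd, lie_smul, map_smul, smul_eq_mul,
    Prod.smul_mk, Prod.ext_iff]
  exact ⟨trivial, by ring, by ring⟩

theorem xiBracket_self (x : 𝔤 × ℝ × ℝ) : xiBracket ξ x x = 0 := by
  simp only [xiBracket, lie_self, Prod.mk_eq_zero]
  exact ⟨trivial, trivial, by ring⟩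

theorem xiBracket_jacobi (hξ : ∀ u v : 𝔤, ξ ⁅u, v⁆ = 0) (x y z : 𝔤 × ℝ × ℝ) :
    xiBracket ξ x (xiBracket ξ y z) + xiBracket ξ y (xiBracket ξ z x) +
      xiBracket ξ z (xiBracket ξ x y) = 0 := by
  simp only [xiBracket, hξ, Prod.mk_add_mk, Prod.mk_eq_zero]
  exact ⟨lie_jacobi x.1 y.1 z.1, by ring, by ring⟩

theorem xiForm_xiBracket_cocycle {Ω : 𝔤 →ₗ[ℝ] 𝔤 →ₗ[ℝ] ℝ}
    (hΩ : ∀ X Y Z : 𝔤, Ω ⁅X, Y⁆ Z + Ω ⁅Y, Z⁆ X + Ω ⁅Z, X⁆ Y = 0) (x y z : 𝔤 × ℝ × ℝ) :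
    xiForm Ω (xiBracket ξ x y) z + xiForm Ω (xiBracket ξ y z) x +
      xiForm Ω (xiBracket ξ z x) y = 0 := by
  simp only [xiForm, xiBracket]
  linear_combination hΩ x.1 y.1 z.1

end Bracket

section Nijenhuis

variable {𝔤 : Type*} [LieRing 𝔤] [LieAlgebra ℝ 𝔤] {ξ : 𝔤 →ₗ[ℝ] ℝ} {j : 𝔤 →ₗ[ℝ] 𝔤}

theorem xiNijenhuis_eq (x y : 𝔤 × ℝ × ℝ) :
    xiNijenhuis ξ j x y = (algNijenhuis j x.1 y.1,
      -(ξ y.1) * x.2.2 - ξ (j x.1) * y.2.1 + ξ (j y.1) * x.2.1 + ξ x.1 * y.2.2,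
      -(ξ (j y.1)) * x.2.2 + ξ (j x.1) * y.2.2 - ξ y.1 * x.2.1 + ξ x.1 * y.2.1) := by
  simp only [xiNijenhuis, xiBracket, xiJ, algNijenhuis, Prod.mk_sub_mk, Prod.ext_iff]
  exact ⟨trivial, by ring, by ring⟩

theorem xiNijenhuis_mk_zero (X Y : 𝔤) :
    xiNijenhuis ξ j (X, 0, 0) (Y, 0, 0) = (algNijenhuis j X Y, 0, 0) := by
  simp [xiNijenhuis_eq]

theorem exists_xiNijenhuis_eq_zero_mk (hξ : ξ ≠ 0) (a b : ℝ) :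
    ∃ x y, xiNijenhuis ξ j x y = ((0 : 𝔤), a, b) := by
  obtain ⟨u, hu⟩ : ∃ u, ξ u ≠ 0 := by
    by_contra! h
    exact hξ (LinearMap.ext h)
  set s := ξ u
  set t := ξ (j u)
  have hD : s ^ 2 + t ^ 2 ≠ 0 := by positivity
  -- invert `(α, β) ↦ (t α - s β, -s α - t β)`, the tensor's value at `((0, α, β), (u, 0, 0))`
  refine ⟨(0, (t * a - s * b) / (s ^ 2 + t ^ 2), -(s * a + t * b) / (s ^ 2 + t ^ 2)),
    (u, 0, 0), ?_⟩
  simp only [xiNijenhuis_eq, algNijenhuis, map_zero, zero_lie, sub_zero,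
    Prod.ext_iff]
  refine ⟨trivial, ?_, ?_⟩ <;>
  · field_simp
    ring

theorem span_xiNijenhuis_eq (hξ : ξ ≠ 0) :
    Submodule.span ℝ {w : 𝔤 × ℝ × ℝ | ∃ x y, w = xiNijenhuis ξ j x y} =
      (Submodule.span ℝ {v : 𝔤 | ∃ X Y : 𝔤, v = algNijenhuis j X Y}).prod
        ((⊤ : Submodule ℝ ℝ).prod ⊤) := by
  set S' := Submodule.span ℝ {w : 𝔤 × ℝ × ℝ | ∃ x y, w = xiNijenhuis ξ j x y}
  apply le_antisymm
  · refine Submodule.span_le.2 ?_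
    rintro w ⟨x, y, rfl⟩
    rw [xiNijenhuis_eq]
    exact ⟨Submodule.subset_span ⟨x.1, y.1, rfl⟩, trivial, trivial⟩
  · rintro ⟨v, a, b⟩ ⟨hv, -, -⟩
    have hinl : (Submodule.span ℝ {v : 𝔤 | ∃ X Y : 𝔤, v = algNijenhuis j X Y}).map
        (LinearMap.inl ℝ 𝔤 (ℝ × ℝ)) ≤ S' := by
      rw [Submodule.map_span, Submodule.span_le]
      rintro _ ⟨_, ⟨X, Y, rfl⟩, rfl⟩
      exact Submodule.subset_span ⟨(X, 0, 0), (Y, 0, 0), xiNijenhuis_mk_zero X Y |>.symm⟩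
    obtain ⟨x, y, hxy⟩ := exists_xiNijenhuis_eq_zero_mk (j := j) hξ a b
    have hab : ((0 : 𝔤), a, b) ∈ S' := Submodule.subset_span ⟨x, y, hxy.symm⟩
    have hsum : ((v, a, b) : 𝔤 × ℝ × ℝ) = (v, 0, 0) + (0, a, b) := by simp
    rw [hsum]
    exact S'.add_mem (hinl ⟨v, hv, rfl⟩) hab

end Nijenhuis

section LowerCentralSeries

variable {V : Type*} [AddCommGroup V] [Module ℝ V] {br : V → V → V}

theorem lcsOf_succ_le {k : ℕ} {P : Submodule ℝ V}
    (h : ∀ x y, y ∈ lcsOf br k → br x y ∈ P) : lcsOf br (k + 1) ≤ P :=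
  Submodule.span_le.2 fun _ ⟨x, y, hy, hw⟩ => hw ▸ h x y hy

theorem lcsOf_antitone : Antitone (lcsOf br) := by
  refine antitone_nat_of_succ_le fun k => ?_
  induction k with
  | zero => exact le_top
  | succ k ih => exact lcsOf_succ_le fun x y hy => Submodule.subset_span ⟨x, y, ih hy, rfl⟩

end LowerCentralSeries

section Nilpotency

variable {𝔤 : Type*} [LieRing 𝔤] [LieAlgebra ℝ 𝔤] {ξ : 𝔤 →ₗ[ℝ] ℝ}

theorem lcsOf_xiBracket_succ_le (k : ℕ) :
    lcsOf (xiBracket ξ) (k + 1) ≤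
      (lcsOf (fun u v : 𝔤 => ⁅u, v⁆) (k + 1)).prod ((⊥ : Submodule ℝ ℝ).prod ⊤) := by
  induction k with
  | zero => exact lcsOf_succ_le fun x y _ => ⟨Submodule.subset_span ⟨x.1, y.1, trivial, rfl⟩,
      rfl, trivial⟩
  | succ k ih => exact lcsOf_succ_le fun x y hy =>
      ⟨Submodule.subset_span ⟨x.1, y.1, (ih hy).1, rfl⟩, rfl, trivial⟩

theorem lcsOf_xiBracket_add_two_le (hξ : ∀ u v : 𝔤, ξ ⁅u, v⁆ = 0) (k : ℕ) :
    lcsOf (xiBracket ξ) (k + 2) ≤ (lcsOf (fun u v : 𝔤 => ⁅u, v⁆) (k + 2)).prod ⊥ := by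
  refine lcsOf_succ_le fun x y hy => ?_
  obtain ⟨hy₁, hy₂, -⟩ := lcsOf_xiBracket_succ_le k hy
  have hξy : ξ y.1 = 0 := by
    have hker : lcsOf (fun u v : 𝔤 => ⁅u, v⁆) (k + 1) ≤ LinearMap.ker ξ :=
      lcsOf_succ_le fun u v _ => hξ u v
    exact hker hy₁
  refine ⟨Submodule.subset_span ⟨x.1, y.1, hy₁, rfl⟩, ?_⟩
  simp [xiBracket, hξy, show y.2.1 = 0 from hy₂]

theorem isNilpotentBr_xiBracket (hξ : ∀ u v : 𝔤, ξ ⁅u, v⁆ = 0)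
    (h : IsNilpotentBr (fun u v : 𝔤 => ⁅u, v⁆)) : IsNilpotentBr (xiBracket ξ) := by
  obtain ⟨N, hN⟩ := h
  refine ⟨N + 2, le_bot_iff.1 ?_⟩
  calc lcsOf (xiBracket ξ) (N + 2)
      ≤ (lcsOf (fun u v : 𝔤 => ⁅u, v⁆) (N + 2)).prod ⊥ := lcsOf_xiBracket_add_two_le hξ N
    _ ≤ (⊥ : Submodule ℝ 𝔤).prod ⊥ := Submodule.prod_mono (hN ▸ lcsOf_antitone (by omega)) le_rfl
    _ = ⊥ := Submodule.prod_bot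

end Nilpotency

theorem stmt_14 (𝔤 : Type*) [LieRing 𝔤] [LieAlgebra ℝ 𝔤]
    (Ω : 𝔤 →ₗ[ℝ] 𝔤 →ₗ[ℝ] ℝ)
    (hΩalt : ∀ X : 𝔤, Ω X X = 0)
    (hΩnondeg : ∀ X : 𝔤, (∀ Y : 𝔤, Ω X Y = 0) → X = 0)
    (hcocycle : ∀ X Y Z : 𝔤, Ω ⁅X, Y⁆ Z + Ω ⁅Y, Z⁆ X + Ω ⁅Z, X⁆ Y = 0)
    (j : 𝔤 →ₗ[ℝ] 𝔤)
    (hj2 : ∀ X : 𝔤, j (j X) = -X)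
    (hcompat : ∀ X Y : 𝔤, Ω (j X) (j Y) = Ω X Y)
    (hpos : ∀ X : 𝔤, X ≠ 0 → 0 < Ω X (j X))
    (ξ : 𝔤 →ₗ[ℝ] ℝ) (hξ0 : ξ ≠ 0) (hξchar : ∀ u v : 𝔤, ξ ⁅u, v⁆ = 0) :
    -- the bracket is bilinear, alternating and satisfies the Jacobi identity
    (∀ x y z : 𝔤 × ℝ × ℝ, xiBracket ξ (x + y) z = xiBracket ξ x z + xiBracket ξ y z) ∧
    (∀ (c : ℝ) (x y : 𝔤 × ℝ × ℝ), xiBracket ξ (c • x) y = c • xiBracket ξ x y) ∧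
    (∀ x y z : 𝔤 × ℝ × ℝ, xiBracket ξ x (y + z) = xiBracket ξ x y + xiBracket ξ x z) ∧
    (∀ (c : ℝ) (x y : 𝔤 × ℝ × ℝ), xiBracket ξ x (c • y) = c • xiBracket ξ x y) ∧
    (∀ x : 𝔤 × ℝ × ℝ, xiBracket ξ x x = 0) ∧
    (∀ x y z : 𝔤 × ℝ × ℝ,
      xiBracket ξ x (xiBracket ξ y z) + xiBracket ξ y (xiBracket ξ z x) +
        xiBracket ξ z (xiBracket ξ x y) = 0) ∧
    -- Ω' is a nondegenerate 2-cocycle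
    (∀ x : 𝔤 × ℝ × ℝ, xiForm Ω x x = 0) ∧
    (∀ x : 𝔤 × ℝ × ℝ, (∀ y, xiForm Ω x y = 0) → x = 0) ∧
    (∀ x y z : 𝔤 × ℝ × ℝ,
      xiForm Ω (xiBracket ξ x y) z + xiForm Ω (xiBracket ξ y z) x +
        xiForm Ω (xiBracket ξ z x) y = 0) ∧
    -- j' is a positive compatible complex structure
    (∀ x : 𝔤 × ℝ × ℝ, xiJ j (xiJ j x) = -x) ∧
    (∀ x y : 𝔤 × ℝ × ℝ, xiForm Ω (xiJ j x) (xiJ j y) = xiForm Ω x y) ∧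
    (∀ x : 𝔤 × ℝ × ℝ, x ≠ 0 → 0 < xiForm Ω x (xiJ j x)) ∧
    -- the image of the Nijenhuis tensor
    Submodule.span ℝ {w : 𝔤 × ℝ × ℝ | ∃ x y, w = xiNijenhuis ξ j x y} =
      (Submodule.span ℝ {v : 𝔤 | ∃ X Y : 𝔤, v = algNijenhuis j X Y}).prod
        ((⊤ : Submodule ℝ ℝ).prod (⊤ : Submodule ℝ ℝ)) ∧
    -- its orthogonal complement
    {x : 𝔤 × ℝ × ℝ |
        ∀ w ∈ Submodule.span ℝ {w : 𝔤 × ℝ × ℝ | ∃ x y, w = xiNijenhuis ξ j x y},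
          xiForm Ω w x = 0} =
      {x : 𝔤 × ℝ × ℝ |
        (∀ v ∈ Submodule.span ℝ {v : 𝔤 | ∃ X Y : 𝔤, v = algNijenhuis j X Y}, Ω v x.1 = 0) ∧
        x.2 = 0} ∧
    -- nilpotency is preserved
    (IsNilpotentBr (fun u v : 𝔤 => ⁅u, v⁆) → IsNilpotentBr (xiBracket ξ)) := by
  refine ⟨xiBracket_add_left, xiBracket_smul_left, xiBracket_add_right, xiBracket_smul_right,
    xiBracket_self, xiBracket_jacobi hξchar, xiForm_self hΩalt, xiForm_nondegenerate hΩnondeg,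
    xiForm_xiBracket_cocycle hcocycle, xiJ_xiJ hj2, xiForm_xiJ_xiJ hcompat,
    fun _ => xiForm_xiJ_pos hpos, span_xiNijenhuis_eq hξ0, ?_, isNilpotentBr_xiBracket hξchar⟩
  rw [span_xiNijenhuis_eq hξ0]
  exact xiForm_orthogonal_prod_top _
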